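/- Let n ∈ ℕ, g : T² → ℝ symmetric and strictly positive, and E the n×n symmetric matrix with entries E_{ij} = g(t_i, t_j). For time series A, B of length n on timestamps t₁,...,t_n with real values a(1),...,a(n), b(1),...,b(n), the elastic inner product defined recursively by eip(A₁ᵏ,B₁ˡ) = eip(A₁^{k-1},B₁ˡ) − eip(A₁^{k-1},B₁^{l-1}) + a(k)·b(l)·g(t_k,t_l) + eip(A₁ᵏ,B₁^{l-1}) (base case 0) equals the bilinear form AᵀEB = Σ_{i=1}^n Σ_{j=1}^n a(i)·g(t_i,t_j)·b(j). -/

import Mathlib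

noncomputable section

/-- A discrete time series is represented as a list of (timestamp, value) pairs,
stored in strictly *decreasing* timestamp order (head = last sample).
`IsTS` says timestamps strictly decrease along the list and no spatial value is zero,
i.e. the list represents an element of `U*` (the empty list being `Ω`). -/
def IsTS {S : Type*} [Zero S] (l : List (ℝ × S)) : Prop :=
  l.Chain' (fun x y => y.1 < x.1) ∧ ∀ p ∈ l, p.2 ≠ (0 : S)

/-- The recursive elastic product with parameters `α β ξ` and functions `f`, `g`:
`ep(A₁ᵖ,B₁ᵠ) = α·ep(A₁ᵖ⁻¹,B₁ᵠ) + β·ep(A₁ᵖ⁻¹,B₁ᵠ⁻¹) + f(a(p),b(q))·g(t_{a(p)},t_{b(q)}) + α·ep(A₁ᵖ,B₁ᵠ⁻¹)`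
with base case `ep(A,Ω) = ep(Ω,B) = ξ`. -/
def ep {S : Type*} (f : S → S → ℝ) (g : ℝ → ℝ → ℝ) (α β ξ : ℝ) :
    List (ℝ × S) → List (ℝ × S) → ℝ
  | [], _ => ξ
  | _ :: _, [] => ξ
  | (t, a) :: A, (u, b) :: B =>
      α * ep f g α β ξ A ((u, b) :: B) + β * ep f g α β ξ A B
        + f a b * g t u + α * ep f g α β ξ ((t, a) :: A) B
  termination_by A B => A.length + B.length


open Classical in
/-- The timestamp-merging addition `⊕`: merge the two series by timestamps, adding the
spatial values at coinciding timestamps and deleting resulting zero values. -/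
def tsAdd {S : Type*} [AddCommGroup S] :
    List (ℝ × S) → List (ℝ × S) → List (ℝ × S)
  | [], l => l
  | l, [] => l
  | (t, a) :: A, (u, b) :: B =>
      if u < t then (t, a) :: tsAdd A ((u, b) :: B)
      else if t < u then (u, b) :: tsAdd ((t, a) :: A) B
      else if a + b = 0 then tsAdd A B
      else (t, a + b) :: tsAdd A B
  termination_by A B => A.length + B.length


open Classical in
/-- Scalar multiplication `⊗`: scale every spatial value, deleting everything if `λ = 0`. -/
def tsSmul {S : Type*} [AddCommGroup S] [Module ℝ S] (r : ℝ) (l : List (ℝ × S)) :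
    List (ℝ × S) :=
  if r = 0 then [] else l.map fun p => (p.1, r • p.2)

/-- `ip` is an inner product on `(U*, ⊕, ⊗)`: symmetric, bilinear
(linearity in the first argument together with symmetry), and positive definite. -/
structure IsInnerOnTS {S : Type*} [AddCommGroup S] [Module ℝ S]
    (ip : List (ℝ × S) → List (ℝ × S) → ℝ) : Prop where
  symm : ∀ A B, IsTS A → IsTS B → ip A B = ip B A
  add_left : ∀ A B C, IsTS A → IsTS B → IsTS C → ip (tsAdd A B) C = ip A C + ip B C
  smul_left : ∀ (r : ℝ) A B, IsTS A → IsTS B → ip (tsSmul r A) B = r * ip A B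
  nonneg : ∀ A, IsTS A → 0 ≤ ip A A
  definite : ∀ A, IsTS A → (ip A A = 0 ↔ A = [])

/- Inclusion–exclusion: with `α = 1, β = -1` the two recursive calls with weight `α` count the
pairs of `A × ((u, b) :: B)` and of `((t, a) :: A) × B`, the one with weight `β` removes the
doubly counted `A × B`, and the last pair is added explicitly. -/
theorem ep_one_neg_one_zero_eq_sum {S : Type*} (f : S → S → ℝ) (g : ℝ → ℝ → ℝ) :
    ∀ A B : List (ℝ × S), ep f g 1 (-1) 0 A B
      = (A.map fun p => (B.map fun q => f p.2 q.2 * g p.1 q.1).sum).sum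
  | [], B => by simp [ep]
  | p :: A, [] => by simp [ep]
  | (t, a) :: A, (u, b) :: B => by
      rw [ep, ep_one_neg_one_zero_eq_sum f g A ((u, b) :: B), ep_one_neg_one_zero_eq_sum f g A B,
        ep_one_neg_one_zero_eq_sum f g ((t, a) :: A) B]
      simp only [List.map_cons, List.sum_cons, List.sum_map_add]
      ring
  termination_by A B => A.length + B.length

theorem eip_eq_matrix_bilinear_form_general
    (n : ℕ) (g : ℝ → ℝ → ℝ)
    (t : Fin n → ℝ)
    (a b : Fin n → ℝ) :
    ep (fun x y : ℝ => x * y) g 1 (-1) 0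
      ((List.ofFn fun i : Fin n => (t i, a i)).reverse)
      ((List.ofFn fun i : Fin n => (t i, b i)).reverse)
    = ∑ i : Fin n, ∑ j : Fin n, a i * g (t i) (t j) * b j := by
  rw [ep_one_neg_one_zero_eq_sum]
  simp only [List.map_reverse, List.sum_reverse, List.map_ofFn, List.sum_ofFn, Function.comp_def]
  exact Finset.sum_congr rfl fun i _ => Finset.sum_congr rfl fun j _ => by ring

/-- for time series of length `n` on a common timestamp grid, the
recursively defined elastic inner product equals the bilinear form `AᵀEB` where
`E_{ij} = g(t_i, t_j)`, i.e. `∑ i ∑ j a(i)·g(t_i,t_j)·b(j)`. -/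
theorem eip_eq_matrix_bilinear_form
    (n : ℕ) (g : ℝ → ℝ → ℝ)
    (hg : ∀ t u, 0 < g t u) (hg_symm : ∀ t u, g t u = g u t)
    (t : Fin n → ℝ) (ht : StrictMono t)
    (a b : Fin n → ℝ) (ha : ∀ i, a i ≠ 0) (hb : ∀ i, b i ≠ 0) :
    ep (fun x y : ℝ => x * y) g 1 (-1) 0
      ((List.ofFn fun i : Fin n => (t i, a i)).reverse)
      ((List.ofFn fun i : Fin n => (t i, b i)).reverse)
    = ∑ i : Fin n, ∑ j : Fin n, a i * g (t i) (t j) * b j :=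
  eip_eq_matrix_bilinear_form_general n g t a b

end
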